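/- In an alternative ring R, the commutative center Z = {z in R : z*r = r*z for all r in R} is closed under multiplication (and under addition and negation), hence is a subring of R. -/

import Mathlib

/-!
Polarizing the left and right alternative laws shows that the associator is an alternating
function, so it is invariant under cyclic permutations and changes sign under transpositions.
If `x` and `y` commute with everything, expanding `(x * y) * r - r * (x * y)` and
`x * (y * r) - (y * r) * x` in associators expresses both the commutator `[x * y, r]` and `0` as
`3 • associator x y r`.
-/

section NonUnitalNonAssocRing

variable {R : Type*} [NonUnitalNonAssocRing R]

theorem associator_sub_associator_add_associator_of_commute {a b c : R} (hab : Commute a b)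
    (hac : Commute a c) (habc : Commute a (b * c)) :
    associator a b c - associator b a c + associator b c a = 0 := by
  simp only [associator_apply, hab.eq, hac.eq, habc.eq]
  abel

theorem mul_mul_sub_mul_mul_eq_associator_of_commute {a b c : R} (hac : Commute a c)
    (hbc : Commute b c) :
    a * b * c - c * (a * b) = associator a b c - associator a c b + associator c a b := by
  simp only [associator_apply, hac.eq, hbc.eq]
  abel

theorem associator_swap_left (hl : ∀ x y : R, (x * x) * y = x * (x * y)) (a b c : R) :
    associator b a c = -associator a b c := by
  have h := hl (a + b) c
  simp only [add_mul, mul_add, hl a c, hl b c] at h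
  rw [associator_apply, associator_apply]
  linear_combination (norm := abel) h

theorem associator_swap_right (hr : ∀ x y : R, (y * x) * x = y * (x * x)) (a b c : R) :
    associator a c b = -associator a b c := by
  have h := hr (b + c) a
  simp only [add_mul, mul_add, hr b a, hr c a] at h
  rw [associator_apply, associator_apply]
  linear_combination (norm := abel) h

theorem associator_cycle (hl : ∀ x y : R, (x * x) * y = x * (x * y))
    (hr : ∀ x y : R, (y * x) * x = y * (x * x)) (a b c : R) :
    associator b c a = associator a b c := by
  rw [associator_swap_right hr, associator_swap_left hl, neg_neg]

theorem three_nsmul_associator_eq_zero_of_forall_commute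
    (hl : ∀ x y : R, (x * x) * y = x * (x * y)) (hr : ∀ x y : R, (y * x) * x = y * (x * x))
    {x : R} (hx : ∀ r, Commute x r) (y z : R) :
    3 • associator x y z = 0 :=
  calc 3 • associator x y z = associator x y z - associator y x z + associator y z x := by
        rw [associator_swap_left hl x y z, associator_cycle hl hr x y z]
        abel
    _ = 0 := associator_sub_associator_add_associator_of_commute (hx y) (hx z) (hx _)

theorem commute_mul_of_forall_commute (hl : ∀ x y : R, (x * x) * y = x * (x * y))
    (hr : ∀ x y : R, (y * x) * x = y * (x * x)) {x y : R} (hx : ∀ r, Commute x r)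
    (hy : ∀ r, Commute y r) (r : R) :
    Commute (x * y) r :=
  sub_eq_zero.mp <|
    calc x * y * r - r * (x * y) = associator x y r - associator x r y + associator r x y :=
          mul_mul_sub_mul_mul_eq_associator_of_commute (hx r) (hy r)
      _ = 3 • associator x y r := by
          rw [associator_swap_right hr x y r, ← associator_cycle hl hr r x y]
          abel
      _ = 0 := three_nsmul_associator_eq_zero_of_forall_commute hl hr hx y r

end NonUnitalNonAssocRing

theorem stmt_3 {R : Type*} [NonUnitalNonAssocRing R]
    (hl : ∀ x y : R, (x*x)*y = x*(x*y))
    (hr : ∀ x y : R, (y*x)*x = y*(x*x)) :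
    ∀ x ∈ {z : R | ∀ r : R, z*r = r*z}, ∀ y ∈ {z : R | ∀ r : R, z*r = r*z},
      x + y ∈ {z : R | ∀ r : R, z*r = r*z} ∧
      -x ∈ {z : R | ∀ r : R, z*r = r*z} ∧
      x * y ∈ {z : R | ∀ r : R, z*r = r*z} := fun _ hx _ hy =>
  ⟨fun r => Commute.add_left (hx r) (hy r), fun r => Commute.neg_left (hx r),
    commute_mul_of_forall_commute hl hr hx hy⟩
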